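/- (Role delegation type II, case 2, graph level.) Let P1 and P2 be disjoint sets of vertices with c1 ∈ P1 and c2 ∈ P2, let S = S(P1, P2, c1, c2) be the binary star graph, and let w ∈ P2 \ {c2}. Let G' = S − (P2 \ {c2, w}) be obtained by deleting all vertices of P2 other than c2 and w, and let S'' = τ_{c1}(G') − c1. Then τ_w(τ_{c2}(τ_w(S'')) − c2) is the star graph on (P1 \ {c1}) ∪ {w} with center w. -/

import Mathlib

open SimpleGraph

universe u

/-- Local complementation of `G` at vertex `i`: adjacency is toggled exactly among
pairs of neighbors of `i`. -/
def localComp {V : Type u} (G : SimpleGraph V) (i : V) : SimpleGraph V where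
  Adj a b := a ≠ b ∧
    ((G.Adj i a ∧ G.Adj i b) ∧ ¬ G.Adj a b ∨ ¬(G.Adj i a ∧ G.Adj i b) ∧ G.Adj a b)
  symm := by
    constructor
    rintro a b ⟨hne, h⟩
    refine ⟨hne.symm, ?_⟩
    rcases h with ⟨⟨ha, hb⟩, hab⟩ | ⟨h1, h2⟩
    · exact Or.inl ⟨⟨hb, ha⟩, fun h => hab h.symm⟩
    · exact Or.inr ⟨fun h => h1 ⟨h.2, h.1⟩, h2.symm⟩
  loopless := ⟨fun a h => h.1 rfl⟩

/-- Vertex deletion `G − i`: remove every edge incident to `i` (the vertex stays,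
isolated). -/
def delVert {V : Type u} (G : SimpleGraph V) (i : V) : SimpleGraph V where
  Adj a b := G.Adj a b ∧ a ≠ i ∧ b ≠ i
  symm := ⟨fun _ _ ⟨h, ha, hb⟩ => ⟨h.symm, hb, ha⟩⟩
  loopless := ⟨fun a h => G.irrefl h.1⟩

/-- Deletion of a set `Z` of vertices: remove every edge incident to a vertex of `Z`. -/
def delSet {V : Type u} (G : SimpleGraph V) (Z : Set V) : SimpleGraph V where
  Adj a b := G.Adj a b ∧ a ∉ Z ∧ b ∉ Z
  symm := ⟨fun _ _ ⟨h, ha, hb⟩ => ⟨h.symm, hb, ha⟩⟩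
  loopless := ⟨fun a h => G.irrefl h.1⟩

/-- Star graph on the set `W` with center `c`: edges are exactly the pairs `{c, u}`
for `u ∈ W \ {c}`. -/
def starGraph {V : Type u} (W : Set V) (c : V) : SimpleGraph V :=
  SimpleGraph.fromRel (fun a b => a = c ∧ b ∈ W \ {c})

/-- Complete graph on the set `A`: edges are exactly all pairs of distinct elements
of `A`. -/
def completeOn {V : Type u} (A : Set V) : SimpleGraph V :=
  SimpleGraph.fromRel (fun a b => a ∈ A ∧ b ∈ A)

/-- Complete bipartite graph on parts `A` and `B`: edges are exactly the pairs
`{a, b}` with `a ∈ A` and `b ∈ B`. -/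
def completeBipartiteOn {V : Type u} (A B : Set V) : SimpleGraph V :=
  SimpleGraph.fromRel (fun a b => a ∈ A ∧ b ∈ B)

/-- Binary star graph `S(P1, P2, c1, c2)`: edges are exactly the pairs `{c1, u}`
with `u ∈ P2` together with the pairs `{u, c2}` with `u ∈ P1`. -/
def binaryStar {V : Type u} (P1 P2 : Set V) (c1 c2 : V) : SimpleGraph V :=
  SimpleGraph.fromRel (fun a b => (a = c1 ∧ b ∈ P2) ∨ (a ∈ P1 ∧ b = c2))

/-- The graph with the single edge `{c1, c2}`. -/
def singleEdge {V : Type u} (c1 c2 : V) : SimpleGraph V :=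
  SimpleGraph.fromRel (fun a b => a = c1 ∧ b = c2)

/-!
Deleting `P2 \ {c2, w}` leaves a binary star in which `c1` sees only `c2` and `w`; local
complementation at `c1` joins `c2` and `w`, so deleting `c1` leaves the star centred at `c2` on
`(P1 \ {c1}) ∪ {w, c2}`. Complementing a star at a leaf changes nothing, complementing it at its
centre yields the clique on its vertex set, deleting `c2` leaves the clique on `(P1 \ {c1}) ∪ {w}`,
and complementing a clique at one of its vertices yields the star centred there.
-/

section Adjacency

variable {V : Type u} {a b : V}

@[simp] lemma localComp_adj {G : SimpleGraph V} {i : V} :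
    (localComp G i).Adj a b ↔ a ≠ b ∧
      ((G.Adj i a ∧ G.Adj i b) ∧ ¬ G.Adj a b ∨ ¬(G.Adj i a ∧ G.Adj i b) ∧ G.Adj a b) :=
  Iff.rfl

@[simp] lemma delVert_adj {G : SimpleGraph V} {i : V} :
    (delVert G i).Adj a b ↔ G.Adj a b ∧ a ≠ i ∧ b ≠ i :=
  Iff.rfl

@[simp] lemma delSet_adj {G : SimpleGraph V} {Z : Set V} :
    (delSet G Z).Adj a b ↔ G.Adj a b ∧ a ∉ Z ∧ b ∉ Z :=
  Iff.rfl

@[simp] lemma starGraph_adj {W : Set V} {c : V} :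
    (starGraph W c).Adj a b ↔ a = c ∧ b ∈ W ∧ b ≠ c ∨ b = c ∧ a ∈ W ∧ a ≠ c := by
  simp only [_root_.starGraph, fromRel_adj, Set.mem_sdiff, Set.mem_singleton_iff]
  grind

@[simp] lemma completeOn_adj {W : Set V} :
    (completeOn W).Adj a b ↔ a ≠ b ∧ a ∈ W ∧ b ∈ W := by
  simp only [completeOn, fromRel_adj]
  tauto

@[simp] lemma binaryStar_adj {P1 P2 : Set V} {c1 c2 : V} :
    (binaryStar P1 P2 c1 c2).Adj a b ↔ a ≠ b ∧
      (a = c1 ∧ b ∈ P2 ∨ a ∈ P1 ∧ b = c2 ∨ b = c1 ∧ a ∈ P2 ∨ b ∈ P1 ∧ a = c2) := by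
  simp only [binaryStar, fromRel_adj]
  tauto

end Adjacency

section LocalComplement

variable {V : Type u}

lemma localComp_eq_self_of_subsingleton {G : SimpleGraph V} {i : V}
    (hi : (G.neighborSet i).Subsingleton) : localComp G i = G := by
  ext a b
  have hab_eq : G.Adj i a → G.Adj i b → a = b := fun ha hb => hi ha hb
  simp only [localComp_adj]
  constructor
  · tauto
  · exact fun h => ⟨h.ne, .inr ⟨fun hab => h.ne (hab_eq hab.1 hab.2), h⟩⟩

lemma localComp_starGraph_of_ne {W : Set V} {c x : V} (hx : x ≠ c) :
    localComp (starGraph W c) x = starGraph W c := by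
  refine localComp_eq_self_of_subsingleton (Set.subsingleton_of_subset_singleton (a := c) ?_)
  intro y hy
  simp only [mem_neighborSet, _root_.starGraph_adj] at hy
  grind

lemma localComp_starGraph_self {W : Set V} {c : V} (hc : c ∈ W) :
    localComp (starGraph W c) c = completeOn W := by
  ext a b
  simp only [localComp_adj, _root_.starGraph_adj, completeOn_adj]
  grind

lemma localComp_completeOn {W : Set V} {x : V} (hx : x ∈ W) :
    localComp (completeOn W) x = starGraph W x := by
  ext a b
  simp only [localComp_adj, _root_.starGraph_adj, completeOn_adj]
  grind

lemma delVert_completeOn (W : Set V) (c : V) :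
    delVert (completeOn W) c = completeOn (W \ {c}) := by
  ext a b
  simp only [delVert_adj, completeOn_adj, Set.mem_sdiff, Set.mem_singleton_iff]
  tauto

end LocalComplement

section BinaryStar

variable {V : Type u} {P1 P2 : Set V} {c1 c2 : V}

lemma delSet_binaryStar {Z : Set V} (hZ : Disjoint P1 Z) (hc1 : c1 ∉ Z) (hc2 : c2 ∉ Z) :
    delSet (binaryStar P1 P2 c1 c2) Z = binaryStar P1 (P2 \ Z) c1 c2 := by
  ext a b
  have ha : a ∈ P1 → a ∉ Z := fun h => hZ.notMem_of_mem_left h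
  have hb : b ∈ P1 → b ∉ Z := fun h => hZ.notMem_of_mem_left h
  simp only [delSet_adj, binaryStar_adj, Set.mem_sdiff]
  grind

lemma delVert_localComp_binaryStar_pair {w : V} (hc1 : c1 ∈ P1) (hc2 : c2 ∉ P1)
    (hw : w ∉ P1) :
    delVert (localComp (binaryStar P1 {c2, w} c1 c2) c1) c1 =
      starGraph (insert c2 ((P1 \ {c1}) ∪ {w})) c2 := by
  ext a b
  simp only [delVert_adj, localComp_adj, binaryStar_adj, _root_.starGraph_adj, Set.mem_insert_iff,
    Set.mem_union, Set.mem_sdiff, Set.mem_singleton_iff]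
  grind

end BinaryStar

/-- Role delegation type II, case 2, graph level:
with `G' = S − (P2 \ {c2, w})` and `S'' = τ_{c1}(G') − c1`,
`τ_w(τ_{c2}(τ_w(S'')) − c2)` is the star graph on `(P1 \ {c1}) ∪ {w}` with center `w`. -/
theorem stmt_12 {V : Type u} (P1 P2 : Set V) (hdisj : Disjoint P1 P2)
    (c1 c2 : V) (hc1 : c1 ∈ P1) (hc2 : c2 ∈ P2) (w : V) (hw : w ∈ P2 \ {c2}) :
    localComp (delVert (localComp (localComp
        (delVert (localComp
          (delSet (binaryStar P1 P2 c1 c2) (P2 \ {c2, w})) c1) c1) w) c2) c2) w =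
      starGraph ((P1 \ {c1}) ∪ {w}) w := by
  obtain ⟨hwP2, hwc2⟩ := hw
  have hc2P1 : c2 ∉ P1 := hdisj.notMem_of_mem_right hc2
  have hwP1 : w ∉ P1 := hdisj.notMem_of_mem_right hwP2
  have hc1P2 : c1 ∉ P2 := hdisj.notMem_of_mem_left hc1
  have hkept : P2 \ (P2 \ {c2, w}) = {c2, w} :=
    Set.sdiff_sdiff_cancel_left (Set.insert_subset hc2 (Set.singleton_subset_iff.mpr hwP2))
  have hc2W : c2 ∉ (P1 \ {c1}) ∪ {w} := by
    rintro (⟨h, -⟩ | h)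
    exacts [hc2P1 h, hwc2 (Set.mem_singleton_iff.mp h).symm]
  rw [delSet_binaryStar (hdisj.mono_right Set.sdiff_subset) (fun h => hc1P2 h.1)
      (fun h => h.2 (Set.mem_insert _ _)), hkept,
    delVert_localComp_binaryStar_pair hc1 hc2P1 hwP1, localComp_starGraph_of_ne hwc2,
    localComp_starGraph_self (Set.mem_insert _ _), delVert_completeOn,
    Set.insert_sdiff_self_of_notMem hc2W]
  exact localComp_completeOn (Or.inr rfl)
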